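/- Suppose {U_m} is a sequence of measurable subsets of [0,1)^n with μ(U_m) ≤ 2^{-m} for all m ≥ 1, and define d(Q) = Σ_{m=1}^∞ μ(U_m ∩ Q)/μ(Q) for half-open dyadic cubes Q ⊆ [0,1)^n. Then d is a well-defined martingale with d([0,1)^n) ≤ 1, and d succeeds (i.e., lim sup_{r→∞} d(Q_r(x)) = ∞) at every point x lying in the interior of U_m for all m. -/

import Mathlib

/-!
Each summand `μ(U_m ∩ Q) / μ(Q)` is already a martingale: the `2 ^ n` children of `Q` partition
it into cubes of volume `μ(Q) / 2 ^ n`. At the root cube the `m`-th summand is at most `2^{-m}`.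
If `x` lies in the interior of `U_1, …, U_k`, then for large `r` the cube `Q_r(x)` lies inside all
of them, so its first `k` summands equal `1` and `d(Q_r(x)) ≥ k`.
-/

open MeasureTheory
open scoped ENNReal

/-- The half-open `r`-dyadic cube at `u`. -/
noncomputable def dCube (n r : ℕ) (u : Fin n → ℤ) : Set (Fin n → ℝ) :=
  Set.univ.pi fun i => Set.Ico ((u i : ℝ) / 2 ^ r) (((u i : ℝ) + 1) / 2 ^ r)

/-- `d(Q) = ∑_{m ≥ 1} μ(U_m ∩ Q)/μ(Q)`. -/
noncomputable def sumMart (n : ℕ) (U : ℕ → Set (Fin n → ℝ)) (r : ℕ) (u : Fin n → ℤ) : ℝ≥0∞ :=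
  ∑' m : ℕ, if 1 ≤ m then volume (U m ∩ dCube n r u) / volume (dCube n r u) else 0

open Filter Function Topology

section DyadicCube

variable {n : ℕ}

def dChild (u : Fin n → ℤ) (a : Fin n → Fin 2) : Fin n → ℤ := fun i => 2 * u i + (a i : ℤ)

theorem mem_dCube_iff {r : ℕ} {u : Fin n → ℤ} {x : Fin n → ℝ} :
    x ∈ dCube n r u ↔ ∀ i, ⌊x i * 2 ^ r⌋ = u i := by
  have h2 : (0 : ℝ) < 2 ^ r := by positivity
  simp only [dCube, Set.mem_univ_pi, Set.mem_Ico, Int.floor_eq_iff, div_le_iff₀ h2,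
    lt_div_iff₀ h2]

theorem mem_dCube_floor (r : ℕ) (x : Fin n → ℝ) : x ∈ dCube n r (fun i => ⌊x i * 2 ^ r⌋) :=
  mem_dCube_iff.mpr fun _ => rfl

theorem measurableSet_dCube (r : ℕ) (u : Fin n → ℤ) : MeasurableSet (dCube n r u) :=
  MeasurableSet.univ_pi fun _ => measurableSet_Ico

theorem pairwise_disjoint_dCube (r : ℕ) : Pairwise (Disjoint on dCube n r) := by
  intro v w hvw
  refine Set.disjoint_left.mpr fun x hv hw => hvw (funext fun i => ?_)
  exact (mem_dCube_iff.mp hv i).symm.trans (mem_dCube_iff.mp hw i)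

theorem dist_lt_of_mem_dCube {r : ℕ} {u : Fin n → ℤ} {x y : Fin n → ℝ}
    (hx : x ∈ dCube n r u) (hy : y ∈ dCube n r u) : dist x y < ((2 : ℝ) ^ r)⁻¹ := by
  have h2 : (0 : ℝ) < 2 ^ r := by positivity
  refine (dist_pi_lt_iff (inv_pos.mpr h2)).mpr fun i => ?_
  have h := Int.abs_sub_lt_one_of_floor_eq_floor
    ((mem_dCube_iff.mp hx i).trans (mem_dCube_iff.mp hy i).symm)
  rw [← sub_mul, abs_mul, abs_of_pos h2] at h
  rwa [Real.dist_eq, ← one_div, lt_div_iff₀ h2]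

theorem eventually_dCube_floor_subset {x : Fin n → ℝ} {s : Set (Fin n → ℝ)} (hs : s ∈ 𝓝 x) :
    ∀ᶠ r in atTop, dCube n r (fun i => ⌊x i * 2 ^ r⌋) ⊆ s := by
  obtain ⟨ε, hε, hball⟩ := Metric.mem_nhds_iff.mp hs
  have hsmall : ∀ᶠ r : ℕ in atTop, ((2 : ℝ) ^ r)⁻¹ < ε := by
    simpa only [inv_pow] using (tendsto_pow_atTop_nhds_zero_of_lt_one (r := (2 : ℝ)⁻¹)
      (by norm_num) (by norm_num)).eventually_lt_const hε
  filter_upwards [hsmall] with r hr y hy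
  exact hball ((dist_lt_of_mem_dCube hy (mem_dCube_floor r x)).trans hr)

theorem floor_mul_two_pow_eq_div_two (y : ℝ) (r : ℕ) :
    ⌊y * 2 ^ r⌋ = ⌊y * 2 ^ (r + 1)⌋ / 2 := by
  rw [pow_succ, ← mul_assoc]
  have h := Int.floor_div_natCast (y * 2 ^ r * 2) 2
  rwa [Nat.cast_ofNat, Nat.cast_ofNat, mul_div_cancel_right₀ _ two_ne_zero] at h

theorem dCube_eq_iUnion_dChild (r : ℕ) (u : Fin n → ℤ) :
    dCube n r u = ⋃ a : Fin n → Fin 2, dCube n (r + 1) (dChild u a) := by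
  ext x
  simp only [Set.mem_iUnion, mem_dCube_iff, dChild, floor_mul_two_pow_eq_div_two _ r]
  constructor
  · intro h
    refine ⟨fun i => ⟨(⌊x i * 2 ^ (r + 1)⌋ % 2).toNat, by omega⟩, fun i => ?_⟩
    have := h i
    simp only
    omega
  · rintro ⟨a, ha⟩ i
    have := (a i).isLt
    rw [ha i]
    omega

theorem dChild_injective (u : Fin n → ℤ) : Function.Injective (dChild u) := by
  intro a b hab
  funext i
  have := congrFun hab i
  simp only [dChild, add_right_inj, Nat.cast_inj] at this
  exact Fin.ext this

theorem measure_inter_dCube_eq_sum (μ : Measure (Fin n → ℝ)) (V : Set (Fin n → ℝ)) (r : ℕ)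
    (u : Fin n → ℤ) :
    μ (V ∩ dCube n r u) = ∑ a : Fin n → Fin 2, μ (V ∩ dCube n (r + 1) (dChild u a)) := by
  -- `V` need not be measurable: additivity is that of `μ.restrict` over the measurable cubes.
  have hdisj : Pairwise (Disjoint on fun a => dCube n (r + 1) (dChild u a)) :=
    fun a b hab => pairwise_disjoint_dCube (r + 1) ((dChild_injective u).ne hab)
  rw [← Measure.restrict_apply' (measurableSet_dCube r u), dCube_eq_iUnion_dChild,
    Measure.restrict_iUnion hdisj fun a => measurableSet_dCube _ _,
    Measure.sum_apply_of_countable, tsum_fintype]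
  simp only [Measure.restrict_apply' (measurableSet_dCube _ _)]

theorem volume_dCube (r : ℕ) (u : Fin n → ℤ) :
    volume (dCube n r u) = ((2 : ℝ≥0∞) ^ r)⁻¹ ^ n := by
  have hside : ∀ i, ((u i : ℝ) + 1) / 2 ^ r - (u i : ℝ) / 2 ^ r = ((2 : ℝ) ^ r)⁻¹ :=
    fun i => by ring
  simp [dCube, Real.volume_pi_Ico, hside, ENNReal.ofReal_inv_of_pos, ENNReal.ofReal_pow]

theorem volume_dCube_ne_zero (r : ℕ) (u : Fin n → ℤ) : volume (dCube n r u) ≠ 0 := by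
  simp [volume_dCube]

theorem volume_dCube_ne_top (r : ℕ) (u : Fin n → ℤ) : volume (dCube n r u) ≠ ⊤ := by
  simp [volume_dCube]

theorem volume_dCube_eq_two_pow_mul (r : ℕ) (u v : Fin n → ℤ) :
    volume (dCube n r u) = 2 ^ n * volume (dCube n (r + 1) v) := by
  rw [volume_dCube, volume_dCube, ← mul_pow, pow_succ, ENNReal.mul_inv (by simp) (by simp),
    mul_comm _ 2⁻¹, ← mul_assoc, ENNReal.mul_inv_cancel (by simp) (by simp), one_mul]

theorem volume_inter_dCube_div_eq_avg (V : Set (Fin n → ℝ)) (r : ℕ) (u : Fin n → ℤ) :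
    volume (V ∩ dCube n r u) / volume (dCube n r u) =
      ((2 : ℝ≥0∞) ^ n)⁻¹ * ∑ a : Fin n → Fin 2,
        volume (V ∩ dCube n (r + 1) (dChild u a)) / volume (dCube n (r + 1) (dChild u a)) := by
  have hchild : ∀ a, volume (dCube n (r + 1) (dChild u a)) = volume (dCube n (r + 1) u) :=
    fun a => by simp only [volume_dCube]
  rw [measure_inter_dCube_eq_sum volume V r u, volume_dCube_eq_two_pow_mul r u u]
  simp only [hchild, div_eq_mul_inv, ← Finset.sum_mul]
  rw [ENNReal.mul_inv (Or.inl (by simp)) (Or.inl (by simp))]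
  ring

end DyadicCube

section SumMartingale

variable {n : ℕ} {U : ℕ → Set (Fin n → ℝ)}

theorem sumMart_eq_tsum_succ (U : ℕ → Set (Fin n → ℝ)) (r : ℕ) (u : Fin n → ℤ) :
    sumMart n U r u = ∑' m : ℕ, volume (U (m + 1) ∩ dCube n r u) / volume (dCube n r u) := by
  rw [sumMart, tsum_eq_zero_add' ENNReal.summable]
  simp

theorem sumMart_eq_avg_children (U : ℕ → Set (Fin n → ℝ)) (r : ℕ) (u : Fin n → ℤ) :
    sumMart n U r u =
      ((2 : ℝ≥0∞) ^ n)⁻¹ * ∑ a : Fin n → Fin 2, sumMart n U (r + 1) (dChild u a) := by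
  rw [sumMart_eq_tsum_succ, tsum_congr fun m => volume_inter_dCube_div_eq_avg (U (m + 1)) r u,
    ENNReal.tsum_mul_left, Summable.tsum_finsetSum fun _ _ => ENNReal.summable]
  simp only [sumMart_eq_tsum_succ]

theorem sumMart_zero_le_one (hμ : ∀ m, 1 ≤ m → volume (U m) ≤ ((2 : ℝ≥0∞) ^ m)⁻¹) :
    sumMart n U 0 0 ≤ 1 :=
  calc sumMart n U 0 0 ≤ ∑' m : ℕ, (2⁻¹ : ℝ≥0∞) ^ (m + 1) := by
        rw [sumMart_eq_tsum_succ, show volume (dCube n 0 0) = 1 by simp [volume_dCube]]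
        refine ENNReal.tsum_le_tsum fun m => ?_
        rw [div_one, ← ENNReal.inv_pow]
        exact (measure_mono Set.inter_subset_left).trans (hμ (m + 1) m.succ_pos)
    _ = 1 := by
        rw [ENNReal.tsum_geometric_add_one, ENNReal.one_sub_inv_two, inv_inv,
          ENNReal.inv_mul_cancel two_ne_zero ENNReal.ofNat_ne_top]

theorem natCast_le_sumMart {r : ℕ} {u : Fin n → ℤ} (k : ℕ)
    (h : ∀ m ∈ Finset.range k, dCube n r u ⊆ U (m + 1)) : (k : ℝ≥0∞) ≤ sumMart n U r u := by
  have hone : ∀ m ∈ Finset.range k,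
      volume (U (m + 1) ∩ dCube n r u) / volume (dCube n r u) = 1 := fun m hm => by
    rw [Set.inter_eq_right.mpr (h m hm),
      ENNReal.div_self (volume_dCube_ne_zero r u) (volume_dCube_ne_top r u)]
  rw [sumMart_eq_tsum_succ]
  calc (k : ℝ≥0∞) = ∑ m ∈ Finset.range k,
        volume (U (m + 1) ∩ dCube n r u) / volume (dCube n r u) := by
        simp [Finset.sum_congr rfl hone]
    _ ≤ _ := ENNReal.sum_le_tsum _

theorem tendsto_sumMart_floor_atTop {x : Fin n → ℝ} (hx : ∀ m, 1 ≤ m → x ∈ interior (U m)) :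
    Tendsto (fun r : ℕ => sumMart n U r fun i => ⌊x i * 2 ^ r⌋) atTop (𝓝 ⊤) := by
  refine ENNReal.tendsto_nhds_top fun k => ?_
  have hsub : ∀ᶠ r in atTop,
      ∀ m ∈ Finset.range (k + 1), dCube n r (fun i => ⌊x i * 2 ^ r⌋) ⊆ U (m + 1) :=
    (eventually_all_finset _).mpr fun m _ =>
      eventually_dCube_floor_subset (mem_interior_iff_mem_nhds.mp (hx (m + 1) m.succ_pos))
  filter_upwards [hsub] with r hr
  exact (Nat.cast_lt.mpr k.lt_succ_self).trans_le (natCast_le_sumMart (k + 1) hr)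

end SumMartingale

theorem stmt2_general (n : ℕ) (U : ℕ → Set (Fin n → ℝ))
    (hμ : ∀ m, 1 ≤ m → volume (U m) ≤ ((2 : ℝ≥0∞) ^ m)⁻¹) :
    (∀ (r : ℕ) (u : Fin n → ℤ),
      sumMart n U r u =
        ((2 : ℝ≥0∞) ^ n)⁻¹ *
          ∑ a : Fin n → Fin 2, sumMart n U (r + 1) (fun i => 2 * u i + (a i : ℤ))) ∧
    sumMart n U 0 0 ≤ 1 ∧
    (∀ x : Fin n → ℝ, x ∈ Set.univ.pi (fun _ => Set.Ico (0 : ℝ) 1) →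
      (∀ m, 1 ≤ m → x ∈ interior (U m)) →
      Filter.limsup (fun r : ℕ => sumMart n U r fun i => ⌊x i * 2 ^ r⌋)
        Filter.atTop = ⊤) :=
  ⟨sumMart_eq_avg_children U, sumMart_zero_le_one hμ,
    fun _ _ hx => (tendsto_sumMart_floor_atTop hx).limsup_eq⟩

/-- if `μ(U_m) ≤ 2^{-m}` for `m ≥ 1`, then
`d(Q) = ∑_{m≥1} μ(U_m ∩ Q)/μ(Q)` is a martingale with `d([0,1)^n) ≤ 1`, and `d`
succeeds (`limsup_r d(Q_r(x)) = ∞`) at every point lying in the interior of all `U_m`. -/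
theorem stmt2 (n : ℕ) (U : ℕ → Set (Fin n → ℝ)) (hU : ∀ m, MeasurableSet (U m))
    (hUsub : ∀ m, U m ⊆ dCube n 0 0)
    (hμ : ∀ m, 1 ≤ m → volume (U m) ≤ ((2 : ℝ≥0∞) ^ m)⁻¹) :
    (∀ (r : ℕ) (u : Fin n → ℤ),
      sumMart n U r u =
        ((2 : ℝ≥0∞) ^ n)⁻¹ *
          ∑ a : Fin n → Fin 2, sumMart n U (r + 1) (fun i => 2 * u i + (a i : ℤ))) ∧
    sumMart n U 0 0 ≤ 1 ∧
    (∀ x : Fin n → ℝ, x ∈ Set.univ.pi (fun _ => Set.Ico (0 : ℝ) 1) →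
      (∀ m, 1 ≤ m → x ∈ interior (U m)) →
      Filter.limsup (fun r : ℕ => sumMart n U r fun i => ⌊x i * 2 ^ r⌋)
        Filter.atTop = ⊤) :=
  stmt2_general n U hμ
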